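/- arXiv:2212.09224 — 2 statements merged into one kernel-verified Lean document; each statement's English description precedes it below -/
import Mathlib

section
/- Let X be a CL-space. (1) Every Scott upset F of X satisfies F = ⋂{ker U | U a clopen upper set of X with F ⊆ U}. (2) X is kernel-stable if and only if X is Scott-stable. -/
open Set Topology

/-- An L-space: a Priestley space (compact, Priestley separation) that is an
Esakia space (downward closure of clopens is clopen) and extremally
order-disconnected (closure of open upper sets is open). -/
structure IsLSpace (X : Type*) [TopologicalSpace X] [PartialOrder X] : Prop where
  compact : CompactSpace X
  priestley : ∀ x y : X, ¬ x ≤ y →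
    ∃ U : Set X, IsClopen U ∧ IsUpperSet U ∧ x ∈ U ∧ y ∉ U
  esakia : ∀ U : Set X, IsClopen U → IsClopen (lowerClosure U : Set X)
  eod : ∀ U : Set X, IsOpen U → IsUpperSet U → IsOpen (closure U)

/-- The localic part of an L-space: points whose down-set is clopen. -/
def localicPart (X : Type*) [TopologicalSpace X] [PartialOrder X] : Set X :=
  {y : X | IsClopen (Set.Iic y)}

/-- An L-morphism: a continuous order-preserving map such that
`f ⁻¹' (closure U) = closure (f ⁻¹' U)` for every open upper set `U`. -/
def IsLMorphism {X₁ X₂ : Type*} [TopologicalSpace X₁] [PartialOrder X₁]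
    [TopologicalSpace X₂] [PartialOrder X₂] (f : X₁ → X₂) : Prop :=
  Continuous f ∧ Monotone f ∧
    ∀ U : Set X₂, IsOpen U → IsUpperSet U → f ⁻¹' closure U = closure (f ⁻¹' U)

/-- `V ≪ U`: for every open upper set `W`, `U ⊆ closure W` implies `V ⊆ W`. -/
def WayBelowSet {X : Type*} [TopologicalSpace X] [PartialOrder X]
    (V U : Set X) : Prop :=
  ∀ W : Set X, IsOpen W → IsUpperSet W → U ⊆ closure W → V ⊆ W

/-- The kernel of a clopen upper set `U`: the union of all clopen upper sets
way below `U`. -/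
def kernelSet {X : Type*} [TopologicalSpace X] [PartialOrder X] (U : Set X) : Set X :=
  ⋃₀ {V : Set X | IsClopen V ∧ IsUpperSet V ∧ WayBelowSet V U}

/-- A CL-space: an L-space in which every clopen upper set `U` is packed,
i.e. `ker U` is dense in `U`. -/
def IsCLSpace (X : Type*) [TopologicalSpace X] [PartialOrder X] : Prop :=
  IsLSpace X ∧ ∀ U : Set X, IsClopen U → IsUpperSet U → U ⊆ closure (kernelSet U)

/-- A Scott upset: a closed upper set all of whose minimal elements lie in the
localic part. -/
def IsScottUpset {X : Type*} [TopologicalSpace X] [PartialOrder X] (F : Set X) : Prop :=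
  IsClosed F ∧ IsUpperSet F ∧
    ∀ x ∈ F, (∀ y ∈ F, y ≤ x → y = x) → x ∈ localicPart X

/-- A proper L-morphism: an L-morphism with `f ⁻¹' (ker U) ⊆ ker (f ⁻¹' U)`
for every clopen upper set `U`. -/
def IsProperLMorphism {X₁ X₂ : Type*} [TopologicalSpace X₁] [PartialOrder X₁]
    [TopologicalSpace X₂] [PartialOrder X₂] (f : X₁ → X₂) : Prop :=
  IsLMorphism f ∧ ∀ U : Set X₂, IsClopen U → IsUpperSet U →
    f ⁻¹' kernelSet U ⊆ kernelSet (f ⁻¹' U)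

/-- Kernel-stability: `ker U ∩ ker V = ker (U ∩ V)` for clopen upper sets. -/
def KernelStable (X : Type*) [TopologicalSpace X] [PartialOrder X] : Prop :=
  ∀ U V : Set X, IsClopen U → IsUpperSet U → IsClopen V → IsUpperSet V →
    kernelSet U ∩ kernelSet V = kernelSet (U ∩ V)

/-- Scott-stability: the intersection of two Scott upsets is a Scott upset. -/
def ScottStable (X : Type*) [TopologicalSpace X] [PartialOrder X] : Prop :=
  ∀ F G : Set X, IsScottUpset F → IsScottUpset G → IsScottUpset (F ∩ G)

/-- L-compactness: every minimal element of `X` lies in the localic part. -/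
def IsLCompact (X : Type*) [TopologicalSpace X] [PartialOrder X] : Prop :=
  ∀ x : X, (∀ y : X, y ≤ x → y = x) → x ∈ localicPart X

/-- The regular part of a clopen upper set `U`: the union of all clopen upper
sets `V` with `↓V ⊆ U`. -/
def regPart {X : Type*} [TopologicalSpace X] [PartialOrder X] (U : Set X) : Set X :=
  ⋃₀ {V : Set X | IsClopen V ∧ IsUpperSet V ∧ (lowerClosure V : Set X) ⊆ U}

/-- L-regularity: every clopen upper set `U` satisfies `U ⊆ closure (reg U)`. -/
def IsLRegular (X : Type*) [TopologicalSpace X] [PartialOrder X] : Prop :=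
  ∀ U : Set X, IsClopen U → IsUpperSet U → U ⊆ closure (regPart U)

section Aux

variable {X : Type*} [TopologicalSpace X] [PartialOrder X]

lemma kernelSet_isOpen (U : Set X) : IsOpen (kernelSet U) :=
  isOpen_sUnion fun _ hV => hV.1.isOpen

lemma kernelSet_isUpperSet (U : Set X) : IsUpperSet (kernelSet U) := by
  intro a b hab ha
  obtain ⟨V, hV, haV⟩ := ha
  exact ⟨V, hV, hV.2.1 hab haV⟩

lemma kernelSet_wayBelow (U : Set X) : WayBelowSet (kernelSet U) U :=
  fun W hWo hWu hUW => sUnion_subset fun _ hV => hV.2.2 W hWo hWu hUW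

lemma wayBelowSet_of_subset_kernel {V U : Set X} (h : V ⊆ kernelSet U) : WayBelowSet V U :=
  fun W hWo hWu hUW => h.trans (kernelSet_wayBelow U W hWo hWu hUW)

lemma wayBelowSet_subset {V U : Set X} (hUo : IsOpen U) (hUu : IsUpperSet U)
    (h : WayBelowSet V U) : V ⊆ U :=
  h U hUo hUu subset_closure

lemma kernelSet_subset {U : Set X} (hUo : IsOpen U) (hUu : IsUpperSet U) : kernelSet U ⊆ U :=
  wayBelowSet_subset hUo hUu (kernelSet_wayBelow U)

lemma kernelSet_mono {U U' : Set X} (h : U ⊆ U') : kernelSet U ⊆ kernelSet U' :=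
  sUnion_subset fun V hV => subset_sUnion_of_mem
    ⟨hV.1, hV.2.1, fun W hWo hWu hUW => hV.2.2 W hWo hWu (h.trans hUW)⟩

lemma subset_kernelSet_of_wayBelow (hX : IsCLSpace X) {V U : Set X} (hU : IsClopen U)
    (hUu : IsUpperSet U) (h : WayBelowSet V U) : V ⊆ kernelSet U :=
  h _ (kernelSet_isOpen U) (kernelSet_isUpperSet U) (hX.2 U hU hUu)

lemma isClosed_Iic_of (hL : IsLSpace X) (x : X) : IsClosed (Set.Iic x) := by
  rw [← isOpen_compl_iff]
  refine isOpen_iff_forall_mem_open.2 fun z hz => ?_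
  obtain ⟨U, hU, hUu, hzU, hxU⟩ := hL.priestley z x hz
  exact ⟨U, fun w hw (hwx : w ≤ x) => hxU (hUu hwx hw), hU.isOpen, hzU⟩

lemma exists_clopen_upper_superset (hL : IsLSpace X) {C : Set X} (hC : IsClosed C) {z : X}
    (h : ∀ c ∈ C, ¬ c ≤ z) : ∃ B : Set X, IsClopen B ∧ IsUpperSet B ∧ C ⊆ B ∧ z ∉ B := by
  haveI := hL.compact
  choose! f hf1 hf2 hf3 hf4 using fun c (hc : c ∈ C) => hL.priestley c z (h c hc)
  have hcov : C ⊆ ⋃ c ∈ C, f c := fun c hc => Set.mem_biUnion hc (hf3 c hc)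
  obtain ⟨b, hbC, hbfin, hsub⟩ := hC.isCompact.elim_finite_subcover_image
    (fun c hc => (hf1 c hc).isOpen) hcov
  refine ⟨⋃ c ∈ b, f c, hbfin.isClopen_biUnion (fun c hc => hf1 c (hbC hc)),
    isUpperSet_iUnion₂ (fun c hc => hf2 c (hbC hc)), hsub, fun hzmem => ?_⟩
  obtain ⟨c, hc, hzc⟩ := Set.mem_iUnion₂.1 hzmem
  exact hf4 c (hbC hc) hzc

lemma exists_clopen_upper_of_not_mem (hL : IsLSpace X) {F : Set X} (hFc : IsClosed F)
    (hFu : IsUpperSet F) {x : X} (hx : x ∉ F) :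
    ∃ U : Set X, IsClopen U ∧ IsUpperSet U ∧ F ⊆ U ∧ x ∉ U :=
  exists_clopen_upper_superset hL hFc fun c hc hle => hx (hFu hle hc)

lemma isClosed_upperClosure_of (hL : IsLSpace X) {C : Set X} (hC : IsClosed C) :
    IsClosed (upperClosure C : Set X) := by
  rw [← isOpen_compl_iff]
  refine isOpen_iff_forall_mem_open.2 fun z hz => ?_
  have h : ∀ c ∈ C, ¬ c ≤ z := fun c hc hle => hz ⟨c, hc, hle⟩
  obtain ⟨B, hB, hBu, hCB, hzB⟩ := exists_clopen_upper_superset hL hC h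
  refine ⟨Bᶜ, fun w hw hwu => ?_, hB.compl.isOpen, hzB⟩
  obtain ⟨c, hc, hcw⟩ := hwu
  exact hw (hBu hcw (hCB hc))

lemma exists_clopen_disjoint (hL : IsLSpace X) {K : Set X} (hK : IsClosed K) {z : X}
    (hz : z ∉ K) : ∃ Cc : Set X, IsClopen Cc ∧ z ∈ Cc ∧ ∀ k ∈ K, k ∉ Cc := by
  haveI := hL.compact
  have key : ∀ k ∈ K, ∃ D : Set X, IsClopen D ∧ k ∈ D ∧ z ∉ D := by
    intro k hk
    by_cases hkz : k ≤ z
    · have hzk : ¬ z ≤ k := fun hzk => hz ((le_antisymm hzk hkz) ▸ hk)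
      obtain ⟨U, hU, _, hzU, hkU⟩ := hL.priestley z k hzk
      exact ⟨Uᶜ, hU.compl, hkU, fun hzc => hzc hzU⟩
    · obtain ⟨U, hU, _, hkU, hzU⟩ := hL.priestley k z hkz
      exact ⟨U, hU, hkU, hzU⟩
  choose! f hf1 hf2 hf3 using key
  have hcov : K ⊆ ⋃ k ∈ K, f k := fun k hk => Set.mem_biUnion hk (hf2 k hk)
  obtain ⟨b, hbK, hbfin, hsub⟩ := hK.isCompact.elim_finite_subcover_image
    (fun k hk => (hf1 k hk).isOpen) hcov
  refine ⟨(⋃ k ∈ b, f k)ᶜ, (hbfin.isClopen_biUnion (fun k hk => hf1 k (hbK hk))).compl,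
    fun hmem => ?_, fun k hk hkc => hkc (hsub hk)⟩
  obtain ⟨k, hk, hzk⟩ := Set.mem_iUnion₂.1 hmem
  exact hf3 k (hbK hk) hzk

lemma isUpperSet_closure_of (hL : IsLSpace X) {A : Set X} (hA : IsUpperSet A) :
    IsUpperSet (closure A) := by
  intro a b hab ha
  by_contra hb
  obtain ⟨Cc, hCc, hbC, hdis⟩ := exists_clopen_disjoint hL isClosed_closure hb
  have hlow := hL.esakia Cc hCc
  have haL : a ∈ (lowerClosure Cc : Set X) := ⟨b, hbC, hab⟩
  rcases mem_closure_iff.1 ha _ hlow.isOpen haL with ⟨w, hwL, hwA⟩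
  obtain ⟨c, hc, hwc⟩ := hwL
  exact hdis c (subset_closure (hA hwc hwA)) hc

lemma exists_minimal_le (hL : IsLSpace X) {F : Set X} (hFc : IsClosed F) {x : X} (hx : x ∈ F) :
    ∃ y, y ∈ F ∧ y ≤ x ∧ ∀ z ∈ F, z ≤ y → z = y := by
  haveI := hL.compact
  set s : Set Xᵒᵈ := {y : Xᵒᵈ | OrderDual.ofDual y ∈ F ∧ OrderDual.ofDual y ≤ x} with hs
  have ih : ∀ c ⊆ s, IsChain (· ≤ ·) c → ∀ y ∈ c, ∃ ub ∈ s, ∀ z ∈ c, z ≤ ub := by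
    intro c hcs hc y hy
    haveI : Nonempty c := ⟨⟨y, hy⟩⟩
    set t : c → Set X := fun i => F ∩ Set.Iic (OrderDual.ofDual i.1) with ht
    have htcl : ∀ i, IsClosed (t i) := fun i => hFc.inter (isClosed_Iic_of hL _)
    have hdir : Directed (· ⊇ ·) t := by
      intro i j
      rcases hc.total i.2 j.2 with hij | hij
      · exact ⟨j, Set.inter_subset_inter_right F
          (Set.Iic_subset_Iic.2 (OrderDual.ofDual_le_ofDual.mpr hij)), le_rfl⟩
      · exact ⟨i, le_rfl, Set.inter_subset_inter_right F
          (Set.Iic_subset_Iic.2 (OrderDual.ofDual_le_ofDual.mpr hij))⟩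
    have hne := IsCompact.nonempty_iInter_of_directed_nonempty_isCompact_isClosed t
      hdir (fun i => ⟨OrderDual.ofDual i.1, (hcs i.2).1, le_rfl⟩)
      (fun i => (htcl i).isCompact) htcl
    obtain ⟨z, hz⟩ := hne
    have hzmem : ∀ i : c, z ∈ t i := fun i => Set.mem_iInter.1 hz i
    exact ⟨OrderDual.toDual z, ⟨(hzmem ⟨y, hy⟩).1, le_trans (hzmem ⟨y, hy⟩).2 (hcs hy).2⟩,
      fun w hw => (hzmem ⟨w, hw⟩).2⟩
  obtain ⟨m, hxm, hm⟩ := zorn_le_nonempty₀ s ih (OrderDual.toDual x) ⟨hx, le_rfl⟩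
  refine ⟨OrderDual.ofDual m, hm.1.1, hm.1.2, fun z hz hzm => ?_⟩
  have hzs : OrderDual.toDual z ∈ s := ⟨hz, hzm.trans hm.1.2⟩
  exact le_antisymm hzm (hm.2 hzs hzm)

end Aux

section Main

variable {X : Type*} [TopologicalSpace X] [PartialOrder X]

lemma scottUpset_subset_kernel (hX : IsCLSpace X) {F U : Set X} (hF : IsScottUpset F)
    (hU : IsClopen U) (hUu : IsUpperSet U) (hFU : F ⊆ U) : F ⊆ kernelSet U := by
  intro x hx
  obtain ⟨y, hyF, hyx, hymin⟩ := exists_minimal_le hX.1 hF.1 hx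
  have hyY : IsClopen (Set.Iic y) := hF.2.2 y hyF hymin
  have hyU : y ∈ closure (kernelSet U) := hX.2 U hU hUu (hFU hyF)
  rcases mem_closure_iff.1 hyU _ hyY.isOpen (Set.mem_Iic.2 le_rfl) with ⟨z, hzIic, hzK⟩
  exact kernelSet_isUpperSet U hyx (kernelSet_isUpperSet U hzIic hzK)

lemma isScottUpset_of_forall_kernel (hX : IsCLSpace X) {H : Set X} (hHc : IsClosed H)
    (hHu : IsUpperSet H)
    (h : ∀ W : Set X, IsClopen W → IsUpperSet W → H ⊆ W → H ⊆ kernelSet W) :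
    IsScottUpset H := by
  obtain ⟨hL, _⟩ := id hX
  refine ⟨hHc, hHu, fun x hxH hxmin => ?_⟩
  set D : Set X := (Set.Iic x)ᶜ with hD
  have hDo : IsOpen D := (isClosed_Iic_of hL x).isOpen_compl
  have hDu : IsUpperSet D := fun a b hab ha hbx => ha (hab.trans hbx)
  have hclDu : IsUpperSet (closure D) := isUpperSet_closure_of hL hDu
  have hclDclopen : IsClopen (closure D) := ⟨isClosed_closure, hL.eod D hDo hDu⟩
  have hxD : x ∉ closure D := by
    by_contra hxcl
    have hKc : IsClosed (upperClosure (H ∩ (closure D)ᶜ) : Set X) :=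
      isClosed_upperClosure_of hL (hHc.inter hclDclopen.isOpen.isClosed_compl)
    have hKu : IsUpperSet (upperClosure (H ∩ (closure D)ᶜ) : Set X) :=
      (upperClosure _).upper
    have hxK : x ∉ (upperClosure (H ∩ (closure D)ᶜ) : Set X) := by
      rintro ⟨h0, hh0, hle⟩
      exact hh0.2 ((hxmin h0 hh0.1 hle) ▸ hxcl)
    obtain ⟨W₀, hW₀, hW₀u, hKW₀, hxW₀⟩ := exists_clopen_upper_of_not_mem hL hKc hKu hxK
    have hHW : H ⊆ closure D ∪ W₀ := by
      intro h0 hh0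
      by_cases hhc : h0 ∈ closure D
      · exact Or.inl hhc
      · exact Or.inr (hKW₀ (subset_upperClosure ⟨hh0, hhc⟩))
    have hxker : x ∈ kernelSet (closure D ∪ W₀) :=
      h _ (hclDclopen.union hW₀) (hclDu.union hW₀u) hHW hxH
    obtain ⟨V, ⟨hVc, hVu, hVwb⟩, hxV⟩ := hxker
    have hWO : closure D ∪ W₀ ⊆ closure (D ∪ W₀) :=
      Set.union_subset (closure_mono Set.subset_union_left)
        (Set.subset_union_right.trans subset_closure)
    have hVsub : V ⊆ D ∪ W₀ := hVwb (D ∪ W₀) (hDo.union hW₀.isOpen) (hDu.union hW₀u) hWO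
    rcases hVsub hxV with hx1 | hx2
    · exact hx1 (Set.mem_Iic.2 le_rfl)
    · exact hxW₀ hx2
  have hclD : closure D = D := by
    refine subset_antisymm (fun z hz => ?_) subset_closure
    by_contra hzD
    have hzx : z ≤ x := not_not.1 hzD
    exact hxD (hclDu hzx hz)
  have hDclosed : IsClosed D := hclD ▸ isClosed_closure
  show IsClopen (Set.Iic x)
  have : Set.Iic x = Dᶜ := (compl_compl _).symm
  rw [this]
  exact ⟨hDo.isClosed_compl, hDclosed.isOpen_compl⟩

lemma interpolation_lemma (hX : IsCLSpace X) {A U : Set X} (hA : IsCompact A)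
    (hU : IsClopen U) (hUu : IsUpperSet U) (hAU : WayBelowSet A U) :
    ∃ B : Set X, IsClopen B ∧ IsUpperSet B ∧ A ⊆ kernelSet B ∧ B ⊆ kernelSet U := by
  set S : Set (Set X) := {B | IsClopen B ∧ IsUpperSet B ∧ WayBelowSet B U} with hS
  set c : S → Set X := fun i => kernelSet i.1 with hc
  have hsub : kernelSet U ⊆ closure (⋃ i, c i) := by
    refine Set.sUnion_subset fun B hB => ?_
    refine (hX.2 B hB.1 hB.2.1).trans ?_
    exact closure_mono (Set.subset_iUnion c ⟨B, hB⟩)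
  have hUO : U ⊆ closure (⋃ i, c i) := by
    refine (hX.2 U hU hUu).trans ?_
    have h2 := closure_mono hsub
    rwa [closure_closure] at h2
  have hAO : A ⊆ ⋃ i, c i :=
    hAU _ (isOpen_iUnion fun i => kernelSet_isOpen _)
      (isUpperSet_iUnion fun i => kernelSet_isUpperSet _) hUO
  obtain ⟨t, ht⟩ := hA.elim_finite_subcover c (fun i => kernelSet_isOpen _) hAO
  refine ⟨⋃ i ∈ t, (i : S).1, t.finite_toSet.isClopen_biUnion (fun i _ => i.2.1),
    isUpperSet_iUnion₂ (fun i _ => i.2.2.1), ?_, ?_⟩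
  · refine ht.trans (Set.iUnion₂_subset fun i hi => ?_)
    exact (kernelSet_mono (Set.subset_biUnion_of_mem (u := fun i : S => (i : Set X)) hi))
  · exact Set.iUnion₂_subset fun i _ => subset_kernelSet_of_wayBelow hX hU hUu i.2.2.2

lemma exists_scottUpset_between (hX : IsCLSpace X) {A U : Set X} (hA : IsClopen A)
    (hAu : IsUpperSet A) (hU : IsClopen U) (hUu : IsUpperSet U) (hAU : WayBelowSet A U) :
    ∃ F : Set X, IsScottUpset F ∧ A ⊆ F ∧ F ⊆ U := by
  haveI := hX.1.compact
  have hAcomp : IsCompact A := hA.isClosed.isCompact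
  have step : ∀ p : {B : Set X // IsClopen B ∧ IsUpperSet B ∧ WayBelowSet A B},
      ∃ q : {B : Set X // IsClopen B ∧ IsUpperSet B ∧ WayBelowSet A B},
        q.1 ⊆ kernelSet p.1 := by
    rintro ⟨B, hB, hBu, hAB⟩
    obtain ⟨C, hC, hCu, hAC, hCB⟩ := interpolation_lemma hX hAcomp hB hBu hAB
    exact ⟨⟨C, hC, hCu, wayBelowSet_of_subset_kernel hAC⟩, hCB⟩
  choose g hg using step
  set seq : ℕ → {B : Set X // IsClopen B ∧ IsUpperSet B ∧ WayBelowSet A B} :=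
    fun n => g^[n] ⟨U, hU, hUu, hAU⟩ with hseq
  set B : ℕ → Set X := fun n => (seq n).1 with hB
  have hsucc : ∀ n, B (n + 1) ⊆ kernelSet (B n) := by
    intro n
    have h1 : seq (n + 1) = g (seq n) := Function.iterate_succ_apply' g n _
    have h2 : B (n + 1) = (g (seq n)).1 := congrArg Subtype.val h1
    rw [h2]
    exact hg (seq n)
  have hdec : ∀ n, B (n + 1) ⊆ B n :=
    fun n => (hsucc n).trans (kernelSet_subset (seq n).2.1.isOpen (seq n).2.2.1)
  have hAB : ∀ n, A ⊆ B n :=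
    fun n => wayBelowSet_subset (seq n).2.1.isOpen (seq n).2.2.1 (seq n).2.2.2
  have hB0 : B 0 = U := rfl
  refine ⟨⋂ n, B n, ?_, Set.subset_iInter hAB, (Set.iInter_subset B 0).trans hB0.subset⟩
  refine isScottUpset_of_forall_kernel hX (isClosed_iInter fun n => (seq n).2.1.isClosed)
    (fun a b hab ha => Set.mem_iInter.2 fun n => (seq n).2.2.1 hab (Set.mem_iInter.1 ha n)) ?_
  intro W hW hWu hFW
  have hex : ∃ n, B n ⊆ W := by
    by_contra hcon
    push_neg at hcon
    have hne : ∀ n, (B n ∩ Wᶜ).Nonempty := by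
      intro n
      obtain ⟨z, hz1, hz2⟩ := Set.not_subset.1 (hcon n)
      exact ⟨z, hz1, hz2⟩
    have := IsCompact.nonempty_iInter_of_sequence_nonempty_isCompact_isClosed
      (fun n => B n ∩ Wᶜ) (fun n => Set.inter_subset_inter_left _ (hdec n)) hne
      ((seq 0).2.1.isClosed.inter hW.compl.isClosed).isCompact
      (fun n => (seq n).2.1.isClosed.inter hW.compl.isClosed)
    obtain ⟨z, hz⟩ := this
    have hz1 : z ∈ ⋂ n, B n := Set.mem_iInter.2 fun n => (Set.mem_iInter.1 hz n).1
    exact (Set.mem_iInter.1 hz 0).2 (hFW hz1)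
  obtain ⟨n, hn⟩ := hex
  exact ((Set.iInter_subset B (n + 1)).trans (hsucc n)).trans (kernelSet_mono hn)

lemma exists_clopen_pair (hL : IsLSpace X) {F G W : Set X} (hFc : IsClosed F)
    (hFu : IsUpperSet F) (hGc : IsClosed G) (hGu : IsUpperSet G) (hW : IsClopen W)
    (hFGW : F ∩ G ⊆ W) :
    ∃ U V : Set X, IsClopen U ∧ IsUpperSet U ∧ IsClopen V ∧ IsUpperSet V ∧
      F ⊆ U ∧ G ⊆ V ∧ U ∩ V ⊆ W := by
  haveI := hL.compact
  by_contra hcon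
  push_neg at hcon
  set S : Set (Set X) := {s | ∃ U V : Set X, (IsClopen U ∧ IsUpperSet U ∧ F ⊆ U) ∧
    (IsClopen V ∧ IsUpperSet V ∧ G ⊆ V) ∧ s = U ∩ V ∩ Wᶜ} with hSdef
  have hmemS : ∀ {U V : Set X}, IsClopen U → IsUpperSet U → F ⊆ U → IsClopen V →
      IsUpperSet V → G ⊆ V → U ∩ V ∩ Wᶜ ∈ S :=
    fun hU hUu hFU hV hVu hGV => ⟨_, _, ⟨hU, hUu, hFU⟩, ⟨hV, hVu, hGV⟩, rfl⟩
  haveI : Nonempty S := ⟨⟨Set.univ ∩ Set.univ ∩ Wᶜ,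
    hmemS isClopen_univ isUpperSet_univ (Set.subset_univ F) isClopen_univ isUpperSet_univ
      (Set.subset_univ G)⟩⟩
  have hdir : DirectedOn (· ⊇ ·) S := by
    rintro s ⟨U, V, ⟨hU, hUu, hFU⟩, ⟨hV, hVu, hGV⟩, rfl⟩
      s' ⟨U', V', ⟨hU', hUu', hFU'⟩, ⟨hV', hVu', hGV'⟩, rfl⟩
    refine ⟨(U ∩ U') ∩ (V ∩ V') ∩ Wᶜ,
      hmemS (hU.inter hU') (hUu.inter hUu') (Set.subset_inter hFU hFU')
        (hV.inter hV') (hVu.inter hVu') (Set.subset_inter hGV hGV'), ?_, ?_⟩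
    · intro z hz
      exact ⟨⟨hz.1.1.1, hz.1.2.1⟩, hz.2⟩
    · intro z hz
      exact ⟨⟨hz.1.1.2, hz.1.2.2⟩, hz.2⟩
  have hclosed : ∀ s ∈ S, IsClosed s := by
    rintro s ⟨U, V, ⟨hU, _, _⟩, ⟨hV, _, _⟩, rfl⟩
    exact (hU.isClosed.inter hV.isClosed).inter hW.compl.isClosed
  have hnonempty : ∀ s ∈ S, s.Nonempty := by
    rintro s ⟨U, V, ⟨hU, hUu, hFU⟩, ⟨hV, hVu, hGV⟩, rfl⟩
    rcases Set.not_subset.1 (hcon U V hU hUu hV hVu hFU hGV) with ⟨z, hz1, hz2⟩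
    exact ⟨z, ⟨hz1.1, hz1.2⟩, hz2⟩
  obtain ⟨z, hz⟩ := IsCompact.nonempty_sInter_of_directed_nonempty_isCompact_isClosed
    hdir hnonempty (fun s hs => (hclosed s hs).isCompact) hclosed
  have hzF : z ∈ F := by
    by_contra hzF
    obtain ⟨U, hU, hUu, hFU, hzU⟩ := exists_clopen_upper_of_not_mem hL hFc hFu hzF
    have := hz _ (hmemS hU hUu hFU isClopen_univ isUpperSet_univ (Set.subset_univ G))
    exact hzU this.1.1
  have hzG : z ∈ G := by
    by_contra hzG
    obtain ⟨V, hV, hVu, hGV, hzV⟩ := exists_clopen_upper_of_not_mem hL hGc hGu hzG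
    have := hz _ (hmemS isClopen_univ isUpperSet_univ (Set.subset_univ F) hV hVu hGV)
    exact hzV this.1.2
  have hzW : z ∉ W := by
    have := hz _ (hmemS isClopen_univ isUpperSet_univ (Set.subset_univ F) isClopen_univ
      isUpperSet_univ (Set.subset_univ G))
    exact this.2
  exact hzW (hFGW ⟨hzF, hzG⟩)

end Main

/-- In a CL-space: (1) every Scott upset `F` is the intersection of the kernels
of the clopen upper sets containing it; (2) the space is kernel-stable iff it
is Scott-stable. -/
theorem scottUpset_eq_sInter_kernels_and_stability {X : Type*}
    [TopologicalSpace X] [PartialOrder X] (hX : IsCLSpace X) :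
    (∀ F : Set X, IsScottUpset F →
      F = ⋂₀ {W : Set X | ∃ U : Set X,
        IsClopen U ∧ IsUpperSet U ∧ F ⊆ U ∧ W = kernelSet U}) ∧
    (KernelStable X ↔ ScottStable X) := by
  constructor
  · intro F hF
    apply subset_antisymm
    · intro x hx
      refine Set.mem_sInter.2 ?_
      rintro W ⟨U, hU, hUu, hFU, rfl⟩
      exact scottUpset_subset_kernel hX hF hU hUu hFU hx
    · intro x hx
      by_contra hxF
      obtain ⟨U, hU, hUu, hFU, hxU⟩ := exists_clopen_upper_of_not_mem hX.1 hF.1 hF.2.1 hxF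
      have hxk : x ∈ kernelSet U := Set.mem_sInter.1 hx _ ⟨U, hU, hUu, hFU, rfl⟩
      exact hxU (kernelSet_subset hU.isOpen hUu hxk)
  · constructor
    · intro hKS F G hF hG
      refine isScottUpset_of_forall_kernel hX (hF.1.inter hG.1) (hF.2.1.inter hG.2.1) ?_
      intro W hW hWu hFGW
      obtain ⟨U, V, hU, hUu, hV, hVu, hFU, hGV, hUVW⟩ :=
        exists_clopen_pair hX.1 hF.1 hF.2.1 hG.1 hG.2.1 hW hFGW
      have h1 : F ⊆ kernelSet U := scottUpset_subset_kernel hX hF hU hUu hFU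
      have h2 : G ⊆ kernelSet V := scottUpset_subset_kernel hX hG hV hVu hGV
      intro z hz
      have hmem : z ∈ kernelSet U ∩ kernelSet V := ⟨h1 hz.1, h2 hz.2⟩
      rw [hKS U V hU hUu hV hVu] at hmem
      exact kernelSet_mono hUVW hmem
    · intro hSS U V hU hUu hV hVu
      apply subset_antisymm
      · rintro x ⟨hxU, hxV⟩
        obtain ⟨A, ⟨hA, hAu, hAU⟩, hxA⟩ := hxU
        obtain ⟨B, ⟨hB, hBu, hBV⟩, hxB⟩ := hxV
        obtain ⟨F, hF, hAF, hFU⟩ := exists_scottUpset_between hX hA hAu hU hUu hAU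
        obtain ⟨G, hG, hBG, hGV⟩ := exists_scottUpset_between hX hB hBu hV hVu hBV
        have hFG := hSS F G hF hG
        exact scottUpset_subset_kernel hX hFG (hU.inter hV) (hUu.inter hVu)
          (Set.inter_subset_inter hFU hGV) ⟨hAF hxA, hBG hxB⟩
      · exact Set.subset_inter (kernelSet_mono Set.inter_subset_left)
          (kernelSet_mono Set.inter_subset_right)
end

section
/- Every KRL-space is a StKL-space; that is, every L-compact L-regular L-space is a Scott-stable CL-space (and is L-compact). -/
open Set Topology

section AuxKRL

variable {X : Type*} [TopologicalSpace X] [PartialOrder X]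

lemma auxKRL_isClosed_Iic (hX : IsLSpace X) (x : X) : IsClosed (Set.Iic x) := by
  rw [← isOpen_compl_iff, isOpen_iff_forall_mem_open]
  intro z hz
  obtain ⟨U, hU, hUup, hzU, hxU⟩ := hX.priestley z x hz
  exact ⟨U, fun u hu hux => hxU (hUup hux hu), hU.isOpen, hzU⟩

lemma auxKRL_exists_minimal (hX : IsLSpace X) {F : Set X} (hF : IsClosed F)
    {x : X} (hx : x ∈ F) :
    ∃ m ∈ F, m ≤ x ∧ ∀ y ∈ F, y ≤ m → y = m := by
  haveI : CompactSpace X := hX.compact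
  set S : Set X := F ∩ Set.Iic x with hSdef
  have hScl : IsClosed S := hF.inter (auxKRL_isClosed_Iic hX x)
  have key := zorn_le_nonempty₀ (α := Xᵒᵈ) S ?_ x ⟨hx, le_rfl⟩
  · obtain ⟨m, hxm, hmS, hmax⟩ := key
    refine ⟨m, hmS.1, hmS.2, fun y hyF hym => ?_⟩
    have hyS : y ∈ S := ⟨hyF, le_trans hym hmS.2⟩
    exact le_antisymm hym (hmax hyS hym)
  · intro c hcS hchain y hy
    haveI : Nonempty c := ⟨⟨y, hy⟩⟩
    set t : c → Set X := fun z => S ∩ Set.Iic (OrderDual.ofDual z.1) with ht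
    have htcl : ∀ i, IsClosed (t i) := fun i => hScl.inter (auxKRL_isClosed_Iic hX _)
    have htn : ∀ i, (t i).Nonempty := fun i => ⟨OrderDual.ofDual i.1, hcS i.2, le_rfl⟩
    have htd : Directed (· ⊇ ·) t := by
      intro i j
      rcases hchain.total i.2 j.2 with h | h
      · exact ⟨j, fun w hw => ⟨hw.1, le_trans hw.2 (OrderDual.ofDual_le_ofDual.mpr h)⟩,
          le_refl _⟩
      · exact ⟨i, le_refl _, fun w hw =>
          ⟨hw.1, le_trans hw.2 (OrderDual.ofDual_le_ofDual.mpr h)⟩⟩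
    obtain ⟨ub, hub⟩ := IsCompact.nonempty_iInter_of_directed_nonempty_isCompact_isClosed
      t htd htn (fun i => (htcl i).isCompact) htcl
    rw [Set.mem_iInter] at hub
    refine ⟨ub, (hub ⟨y, hy⟩).1, fun z hz => (hub ⟨z, hz⟩).2⟩

lemma auxKRL_helper (hX : IsLSpace X) (hr : IsLRegular X) {a b x : X}
    (ha : IsClopen (Set.Iic a)) (hax : a ≤ x) (hbx : b ≤ x) (hab : ¬ a ≤ b) : False := by
  obtain ⟨A, hA, hAup, haA, hbA⟩ := hX.priestley a b hab
  have hacl : a ∈ closure (regPart A) := hr A hA hAup haA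
  obtain ⟨w, hwa, hwreg⟩ := mem_closure_iff.mp hacl (Set.Iic a) ha.isOpen le_rfl
  obtain ⟨V, ⟨hVc, hVu, hVd⟩, hwV⟩ := hwreg
  have hxV : x ∈ V := hVu (le_trans hwa hax) hwV
  have hbV : b ∈ (lowerClosure V : Set X) := ⟨x, hxV, hbx⟩
  exact hbA (hVd hbV)

lemma auxKRL_loc_eq (hX : IsLSpace X) (hr : IsLRegular X) {m n x : X}
    (hm : IsClopen (Set.Iic m)) (hn : IsClopen (Set.Iic n)) (hmx : m ≤ x) (hnx : n ≤ x) :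
    m = n := by
  by_cases h1 : m ≤ n
  · by_cases h2 : n ≤ m
    · exact le_antisymm h1 h2
    · exact (auxKRL_helper hX hr hn hnx hmx h2).elim
  · exact (auxKRL_helper hX hr hm hmx hnx h1).elim

end AuxKRL

/-- Every KRL-space (L-compact L-regular L-space) is a StKL-space, i.e. a
Scott-stable CL-space that is L-compact. -/
theorem krlSpace_is_stklSpace {X : Type*} [TopologicalSpace X] [PartialOrder X]
    (hX : IsLSpace X) (hk : IsLCompact X) (hr : IsLRegular X) :
    IsCLSpace X ∧ ScottStable X ∧ IsLCompact X := by
  haveI : CompactSpace X := hX.compact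
  have hreg_ker : ∀ U : Set X, IsClopen U → IsUpperSet U → regPart U ⊆ kernelSet U := by
    intro U hU hUup v hv
    obtain ⟨V, ⟨hVc, hVu, hVd⟩, hvV⟩ := hv
    refine Set.mem_sUnion.mpr ⟨V, ⟨hVc, hVu, ?_⟩, hvV⟩
    intro W hWo hWu hUW v' hv'
    by_contra hvW
    have hFcl : IsClosed (Set.Iic v' ∩ Wᶜ) :=
      (auxKRL_isClosed_Iic hX v').inter (isClosed_compl_iff.mpr hWo)
    obtain ⟨mm, hmF, hmv, hmin⟩ := auxKRL_exists_minimal hX hFcl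
      (⟨le_rfl, hvW⟩ : v' ∈ Set.Iic v' ∩ Wᶜ)
    have hminX : ∀ y, y ≤ mm → y = mm := by
      intro y hy
      refine hmin y ⟨le_trans hy hmF.1, fun hyW => hmF.2 (hWu hy hyW)⟩ hy
    have hmY : IsClopen (Set.Iic mm) := hk mm hminX
    have hmU : mm ∈ U := hVd (⟨v', hv', hmF.1⟩ : mm ∈ (lowerClosure V : Set X))
    obtain ⟨w, hwm, hwW⟩ := mem_closure_iff.mp (hUW hmU) (Set.Iic mm) hmY.isOpen le_rfl
    exact hmF.2 (hWu hwm hwW)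
  have hCL : IsCLSpace X := by
    refine ⟨hX, fun U hU hUup => Set.Subset.trans (hr U hU hUup)
      (closure_mono (hreg_ker U hU hUup))⟩
  have hSS : ScottStable X := by
    intro F G hF hG
    refine ⟨hF.1.inter hG.1, hF.2.1.inter hG.2.1, ?_⟩
    intro x hxFG hxmin
    obtain ⟨m, hmF, hmx, hmmin⟩ := auxKRL_exists_minimal hX hF.1 hxFG.1
    obtain ⟨n, hnG, hnx, hnmin⟩ := auxKRL_exists_minimal hX hG.1 hxFG.2
    have hmY : m ∈ localicPart X := hF.2.2 m hmF hmmin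
    have hnY : n ∈ localicPart X := hG.2.2 n hnG hnmin
    have hmn : m = n := auxKRL_loc_eq hX hr hmY hnY hmx hnx
    have hmG : m ∈ G := by rw [hmn]; exact hnG
    have hmeq : m = x := hxmin m ⟨hmF, hmG⟩ hmx
    rw [← hmeq]; exact hmY
  exact ⟨hCL, hSS, hk⟩
end
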